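/- arXiv:2210.15095 — 3 statements merged into one kernel-verified Lean document; each statement's English description precedes it below -/
import Mathlib

section
/- Let λ : ℕ → ℝ satisfy λ(1) = 1 and λ(m)λ(n) = Σ_{d | gcd(m,n)} λ(mn/d²) for all m,n ≥ 1. Then for any positive integers a, b, |λ(a²)λ(b²)| ≤ Σ_{r₁ | a} |μ(r₁)| Σ_{r₂ | b} |μ(r₂)| Σ_{k₁ | a/r₁} Σ_{k₂ | b/r₂} λ(k₁²)λ(k₂²), where μ is the Möbius function. -/
open Finset ArithmeticFunction
open scoped ArithmeticFunction.Moebius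

/-- Möbius-inversion bound for products of Hecke eigenvalues at squares:
if `lam` satisfies the Hecke relation, then
`|λ(a²)λ(b²)| ≤ ∑_{r₁∣a} |μ(r₁)| ∑_{r₂∣b} |μ(r₂)| ∑_{k₁∣a/r₁} ∑_{k₂∣b/r₂} λ(k₁²)λ(k₂²)`. -/
theorem abs_lam_sq_mul_le_moebius_sum
    (lam : ℕ → ℝ) (h1 : lam 1 = 1)
    (hHecke : ∀ m n : ℕ, 1 ≤ m → 1 ≤ n →
      lam m * lam n = ∑ d ∈ (Nat.gcd m n).divisors, lam (m * n / d ^ 2))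
    (a b : ℕ) (ha : 1 ≤ a) (hb : 1 ≤ b) :
    |lam (a ^ 2) * lam (b ^ 2)| ≤
      ∑ r₁ ∈ a.divisors, |(μ r₁ : ℝ)| *
        ∑ r₂ ∈ b.divisors, |(μ r₂ : ℝ)| *
          ∑ k₁ ∈ (a / r₁).divisors, ∑ k₂ ∈ (b / r₂).divisors,
            lam (k₁ ^ 2) * lam (k₂ ^ 2) := by
  -- Lemma A : lam n ^ 2 = ∑_{d | n} lam (d^2)
  have hA : ∀ n : ℕ, 0 < n → lam n ^ 2 = ∑ d ∈ n.divisors, lam (d ^ 2) := by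
    intro n hn
    have h := hHecke n n hn hn
    rw [Nat.gcd_self] at h
    have h2 : ∑ d ∈ n.divisors, lam (n * n / d ^ 2)
        = ∑ d ∈ n.divisors, lam ((n / d) ^ 2) := by
      refine Finset.sum_congr rfl fun d hd => ?_
      obtain ⟨hdvd, -⟩ := Nat.mem_divisors.mp hd
      congr 1
      obtain ⟨c, rfl⟩ := hdvd
      have hd0 : 0 < d := Nat.pos_of_dvd_of_pos ⟨c, rfl⟩ hn
      rw [Nat.mul_div_cancel_left _ hd0]
      have : d * c * (d * c) = c ^ 2 * d ^ 2 := by ring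
      rw [this, Nat.mul_div_cancel _ (pow_pos hd0 2)]
    rw [sq, h, h2]
    exact Nat.sum_div_divisors n (fun d => lam (d ^ 2))
  -- Möbius inversion : lam (n^2) = ∑_{r | n} μ r * lam (n/r) ^ 2
  have hB : ∀ n : ℕ, 0 < n →
      lam (n ^ 2) = ∑ r ∈ n.divisors, (μ r : ℝ) * lam (n / r) ^ 2 := by
    intro n hn
    have := (sum_eq_iff_sum_mul_moebius_eq (R := ℝ)
      (f := fun k => lam (k ^ 2)) (g := fun k => lam k ^ 2)).mp
      (fun m hm => (hA m hm).symm) n hn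
    rw [← this, Nat.sum_divisorsAntidiagonal (fun i j => (μ i : ℝ) * lam j ^ 2)]
  -- pointwise bound for a single factor
  have habs : ∀ n : ℕ, 0 < n →
      |lam (n ^ 2)| ≤ ∑ r ∈ n.divisors, |(μ r : ℝ)| * lam (n / r) ^ 2 := by
    intro n hn
    rw [hB n hn]
    refine le_trans (Finset.abs_sum_le_sum_abs _ _) (le_of_eq ?_)
    refine Finset.sum_congr rfl fun r hr => ?_
    rw [abs_mul, abs_of_nonneg (sq_nonneg (lam (n / r)))]
  -- each factor sum is nonnegative
  have hnonneg : ∀ n : ℕ, (0:ℝ) ≤ ∑ r ∈ n.divisors, |(μ r : ℝ)| * lam (n / r) ^ 2 :=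
    fun n => Finset.sum_nonneg fun r _ => mul_nonneg (abs_nonneg _) (sq_nonneg _)
  have key : |lam (a ^ 2) * lam (b ^ 2)| ≤
      (∑ r ∈ a.divisors, |(μ r : ℝ)| * lam (a / r) ^ 2) *
      (∑ r ∈ b.divisors, |(μ r : ℝ)| * lam (b / r) ^ 2) := by
    rw [abs_mul]
    exact mul_le_mul (habs a ha) (habs b hb) (abs_nonneg _)
      (le_trans (abs_nonneg _) (habs a ha))
  refine key.trans (le_of_eq ?_)
  rw [Finset.sum_mul]
  refine Finset.sum_congr rfl fun r₁ hr₁ => ?_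
  rw [mul_assoc, Finset.mul_sum]
  congr 1
  refine Finset.sum_congr rfl fun r₂ hr₂ => ?_
  have ha1 : 0 < a / r₁ :=
    Nat.div_pos (Nat.le_of_dvd ha (Nat.mem_divisors.mp hr₁).1)
      (Nat.pos_of_mem_divisors hr₁)
  have hb1 : 0 < b / r₂ :=
    Nat.div_pos (Nat.le_of_dvd hb (Nat.mem_divisors.mp hr₂).1)
      (Nat.pos_of_mem_divisors hr₂)
  have : ∑ k₁ ∈ (a / r₁).divisors, ∑ k₂ ∈ (b / r₂).divisors,
      lam (k₁ ^ 2) * lam (k₂ ^ 2)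
      = (∑ k₁ ∈ (a / r₁).divisors, lam (k₁ ^ 2)) *
        (∑ k₂ ∈ (b / r₂).divisors, lam (k₂ ^ 2)) := by
    rw [Finset.sum_mul_sum]
  rw [this, ← hA _ ha1, ← hA _ hb1]
  ring
end

section
/- Let g : ℝ → ℂ be measurable with ĝ(ξ) entire when extended, satisfying |ĝ(ξ)| ≪ M/(|ξ|+1)³ uniformly for |Im ξ| < 1/(2π). Suppose |W(r)|² = r^{−1} (1/(2πi)) ∫_{Re s = c} r^s ĝ(s/(2πi)) ds for any c ∈ (−1,1). Then for D ≥ 1 and H ≥ 1, H² Σ_{λ ≥ 1} |W(λH/D)|² = (H·D/(2πi)) ∫_{Re s = −2ε} ζ(1−s)(H/D)^s ĝ(s/(2πi)) ds, and this is ≪_ε M·H·D^{1+2ε}/H^{2ε} · ζ(1+2ε)-type bound, i.e. ≪_ε M·H·D^{2ε}·D. -/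
open Complex


lemma xi_eq (c u : ℝ) :
    (((c:ℝ):ℂ) + u*Complex.I) / (2*Real.pi*Complex.I)
      = ((u/(2*Real.pi) : ℝ) : ℂ) + ((-c/(2*Real.pi) : ℝ):ℂ) * Complex.I := by
  have hπ : (Real.pi : ℂ) ≠ 0 := by exact_mod_cast Real.pi_ne_zero
  rw [div_eq_iff (by simp [hπ, Complex.I_ne_zero])]
  push_cast
  field_simp
  ring_nf
  simp [Complex.I_sq]

lemma G_decay (ε M : ℝ) (hε0 : 0 < ε) (hε1 : ε < 1/4) (hM : 0 ≤ M) (G : ℂ → ℂ)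
    (hG : ∀ ξ : ℂ, |ξ.im| < 1 / (2 * Real.pi) → ‖G ξ‖ ≤ M / (‖ξ‖ + 1) ^ 3)
    (u : ℝ) :
    ‖G ((((-2*ε:ℝ):ℂ) + u*Complex.I) / (2*Real.pi*Complex.I))‖
      ≤ M * (4*Real.pi^2) / (1 + u^2) := by
  have hπ := Real.pi_pos
  have hπ3 := Real.pi_gt_three
  set ξ := (((-2*ε:ℝ):ℂ) + u*Complex.I) / (2*Real.pi*Complex.I) with hξ
  have hxi : ξ = ((u/(2*Real.pi) : ℝ) : ℂ) + ((2*ε/(2*Real.pi) : ℝ):ℂ) * Complex.I := by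
    rw [hξ, xi_eq]; norm_num
  have him : ξ.im = 2*ε/(2*Real.pi) := by
    rw [hxi]
    simp only [Complex.add_im, Complex.ofReal_im, Complex.mul_im, Complex.ofReal_re,
      Complex.I_im, Complex.I_re]
    ring
  have hre : ξ.re = u/(2*Real.pi) := by
    rw [hxi]
    simp only [Complex.add_re, Complex.ofReal_re, Complex.mul_re, Complex.ofReal_im,
      Complex.I_im, Complex.I_re]
    ring
  have h1 : ‖G ξ‖ ≤ M / (‖ξ‖ + 1) ^ 3 := by
    apply hG
    rw [him, _root_.abs_of_nonneg (by positivity)]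
    rw [div_lt_div_iff₀ (by positivity) (by positivity)]
    nlinarith
  have hXre : |u| / (2*Real.pi) ≤ ‖ξ‖ := by
    have h := Complex.abs_re_le_norm ξ
    rw [hre, abs_div, _root_.abs_of_nonneg (by positivity : (0:ℝ) ≤ 2*Real.pi)] at h
    exact h
  have hX0 : (0:ℝ) ≤ ‖ξ‖ := norm_nonneg ξ
  refine h1.trans ?_
  rw [div_le_div_iff₀ (by positivity) (by positivity)]
  have hu : |u| ^ 2 = u ^ 2 := sq_abs u
  set X := ‖ξ‖
  have hsq : u^2 ≤ (2*Real.pi)^2 * X^2 := by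
    have h2 := mul_le_mul hXre hXre (by positivity) hX0
    rw [div_mul_div_comm, ← sq, ← sq, hu] at h2
    rw [div_le_iff₀ (by positivity)] at h2
    nlinarith
  have e1 : X^2 + 1 ≤ (X+1)^3 := by nlinarith [sq_nonneg X]
  have e2 : 1 + u^2 ≤ 4*Real.pi^2*(X^2+1) := by nlinarith [sq_nonneg Real.pi]
  calc M*(1+u^2) ≤ M*(4*Real.pi^2*(X^2+1)) := mul_le_mul_of_nonneg_left e2 hM
    _ ≤ M*(4*Real.pi^2*(X+1)^3) := by
        apply mul_le_mul_of_nonneg_left _ hM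
        exact mul_le_mul_of_nonneg_left e1 (by positivity)
    _ = M*(4*Real.pi^2)*(X+1)^3 := by ring

lemma zeta_sum_eq (s : ℂ) (hs : s.re < 0) :
    ∑' n : ℕ, (((n:ℝ)+1 : ℝ) : ℂ) ^ (s - 1) = riemannZeta (1 - s) := by
  rw [zeta_eq_tsum_one_div_nat_add_one_cpow (by simp [Complex.sub_re]; linarith)]
  congr 1
  funext n
  rw [one_div, ← Complex.cpow_neg]
  push_cast
  ring_nf

lemma sum_shift (a : ℝ) (ha : 1 < a) : Summable (fun n : ℕ => ((n:ℝ)+1) ^ (-a)) := by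
  have h : Summable (fun n : ℕ => ((n:ℝ)) ^ (-a)) := Real.summable_nat_rpow.mpr (by linarith)
  have := (summable_nat_add_iff 1).mpr h
  simpa using this


lemma alg_helper (H D a X w : ℂ) (ha : a ≠ 0) (hw : w ≠ 0) (hH : H ≠ 0) :
    H^2 * ((a * H / D)⁻¹ * (1 / w) * (a * X)) = (H * D / w) * X := by
  field_simp

/-- Contour-integral evaluation of the smoothed sinc sum: if `|W(r)|²` has the Mellin
representation with transform `ĝ` (here `G`) decaying like `M/(|ξ|+1)³` on the strip
`|Im ξ| < 1/(2π)`, then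
`H² ∑_{λ≥1} |W(λH/D)|² = (HD/(2πi)) ∫_{Re s = -2ε} ζ(1-s)(H/D)^s ĝ(s/(2πi)) ds`,
and this is `≪_ε M·H·D^{2ε}·D`. -/
theorem smoothed_sinc_contour (ε : ℝ) (hε0 : 0 < ε) (hε1 : ε < 1/4) :
    ∃ C > 0, ∀ M H D : ℝ, 0 < M → 1 ≤ H → 1 ≤ D →
      ∀ W : ℝ → ℂ, ∀ G : ℂ → ℂ, Differentiable ℂ G →
      (∀ ξ : ℂ, |ξ.im| < 1 / (2 * Real.pi) →
        ‖G ξ‖ ≤ M / (‖ξ‖ + 1) ^ 3) →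
      (∀ r : ℝ, 0 < r → ∀ c : ℝ, -1 < c → c < 1 →
        ((‖W r‖ ^ 2 : ℝ) : ℂ) = (r : ℂ)⁻¹ * (1 / (2 * Real.pi * Complex.I)) *
          ∫ u : ℝ, (r : ℂ) ^ ((c : ℂ) + u * Complex.I) *
            G (((c : ℂ) + u * Complex.I) / (2 * Real.pi * Complex.I)) * Complex.I) →
      (((H : ℂ) ^ 2 * ∑' l : ℕ, ((‖W (((l : ℝ) + 1) * H / D)‖ ^ 2 : ℝ) : ℂ) =
          ((H : ℂ) * (D : ℂ) / (2 * Real.pi * Complex.I)) *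
            ∫ u : ℝ, riemannZeta (1 - (((-2 * ε : ℝ) : ℂ) + u * Complex.I)) *
              ((H / D : ℝ) : ℂ) ^ (((-2 * ε : ℝ) : ℂ) + u * Complex.I) *
              G ((((-2 * ε : ℝ) : ℂ) + u * Complex.I) / (2 * Real.pi * Complex.I)) *
              Complex.I) ∧
        H ^ 2 * ∑' l : ℕ, ‖W (((l : ℝ) + 1) * H / D)‖ ^ 2 ≤
          C * M * H * D ^ (2 * ε) * D) := by
  have hπ := Real.pi_pos
  have hsumZ : Summable (fun n : ℕ => ((n:ℝ)+1) ^ (-(1+2*ε))) :=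
    sum_shift (1+2*ε) (by linarith)
  set Z : ℝ := ∑' n : ℕ, ((n:ℝ)+1) ^ (-(1+2*ε)) with hZdef
  have hZpos : 0 < Z := by
    refine Summable.tsum_pos hsumZ (fun n => by positivity) 0 (by positivity)
  refine ⟨2*Real.pi^2*Z + 1, by positivity, ?_⟩
  intro M H D hM hH hD W G hGdiff hGbound hMellin
  have hH0 : (0:ℝ) < H := by linarith
  have hD0 : (0:ℝ) < D := by linarith
  set F : ℕ → ℝ → ℂ := fun l u =>
    (((l:ℝ)+1 : ℝ) : ℂ) ^ ((((-2 * ε : ℝ) : ℂ) + u * Complex.I) - 1) *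
    ((H/D : ℝ) : ℂ) ^ (((-2 * ε : ℝ) : ℂ) + u * Complex.I) *
    G ((((-2 * ε : ℝ) : ℂ) + u * Complex.I) / (2 * Real.pi * Complex.I)) * Complex.I
    with hFdef
  set CB : ℝ := (H/D) ^ (-(2*ε)) * (M*(4*Real.pi^2)) with hCBdef
  have hCB0 : 0 ≤ CB := by positivity
  -- norm bound on F
  have hFnorm : ∀ l u, ‖F l u‖ ≤ ((l:ℝ)+1)^(-(1+2*ε)) * CB * (1+u^2)⁻¹ := by
    intro l u
    have hg := G_decay ε M hε0 hε1 hM.le G hGbound u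
    have h1 : ‖(((l:ℝ)+1 : ℝ):ℂ) ^ ((((-2 * ε : ℝ) : ℂ) + u * Complex.I) - 1)‖
        = ((l:ℝ)+1) ^ (-(1+2*ε)) := by
      rw [Complex.norm_cpow_eq_rpow_re_of_pos (by positivity)]
      congr 1
      simp [Complex.sub_re, Complex.add_re]
      ring
    have h2 : ‖((H/D : ℝ):ℂ) ^ (((-2 * ε : ℝ) : ℂ) + u * Complex.I)‖
        = (H/D) ^ (-(2*ε)) := by
      rw [Complex.norm_cpow_eq_rpow_re_of_pos (by positivity)]
      congr 1
      simp [Complex.add_re]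
    have hFn : ‖F l u‖ = ((l:ℝ)+1)^(-(1+2*ε)) * ((H/D)^(-(2*ε)) *
        ‖G ((((-2 * ε : ℝ) : ℂ) + u * Complex.I) / (2 * Real.pi * Complex.I))‖) := by
      rw [hFdef]
      simp only [norm_mul, Complex.norm_I, mul_one, h1, h2]
      ring
    rw [hFn, hCBdef]
    have : M * (4*Real.pi^2) / (1+u^2) = M*(4*Real.pi^2) * (1+u^2)⁻¹ := by
      rw [div_eq_mul_inv]
    rw [this] at hg
    calc ((l:ℝ)+1)^(-(1+2*ε)) * ((H/D)^(-(2*ε)) * ‖G _‖)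
        ≤ ((l:ℝ)+1)^(-(1+2*ε)) * ((H/D)^(-(2*ε)) * (M*(4*Real.pi^2) * (1+u^2)⁻¹)) := by
          gcongr
      _ = ((l:ℝ)+1)^(-(1+2*ε)) * ((H/D)^(-(2*ε)) * (M*(4*Real.pi^2))) * (1+u^2)⁻¹ := by
          ring
  -- continuity of F l
  have hscont : Continuous (fun u : ℝ => ((-2 * ε : ℝ) : ℂ) + u * Complex.I) :=
    continuous_const.add (Complex.continuous_ofReal.mul continuous_const)
  have hFcont : ∀ l, Continuous (F l) := by
    intro l
    apply Continuous.mul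
    apply Continuous.mul
    apply Continuous.mul
    · exact (hscont.sub continuous_const).const_cpow
        (Or.inl (by exact_mod_cast (by positivity : ((l:ℝ)+1) ≠ 0)))
    · exact hscont.const_cpow (Or.inl (by exact_mod_cast (by positivity : H/D ≠ 0)))
    · exact hGdiff.continuous.comp (hscont.div_const _)
    · exact continuous_const
  -- integrability
  have hbddint : ∀ (k : ℝ), MeasureTheory.Integrable (fun u : ℝ => k * (1+u^2)⁻¹) :=
    fun k => integrable_inv_one_add_sq.const_mul k
  have hFint : ∀ l, MeasureTheory.Integrable (F l) := by
    intro l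
    refine (hbddint (((l:ℝ)+1)^(-(1+2*ε)) * CB)).mono' (hFcont l).aestronglyMeasurable ?_
    filter_upwards with u
    exact hFnorm l u
  have hIle : ∀ l, (∫ u : ℝ, ‖F l u‖) ≤ ((l:ℝ)+1)^(-(1+2*ε)) * (CB * Real.pi) := by
    intro l
    have h1 : (∫ u : ℝ, ‖F l u‖) ≤ ∫ u : ℝ, ((l:ℝ)+1)^(-(1+2*ε)) * CB * (1+u^2)⁻¹ :=
      MeasureTheory.integral_mono (hFint l).norm (hbddint _) (hFnorm l)
    rw [MeasureTheory.integral_const_mul, integral_univ_inv_one_add_sq] at h1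
    calc (∫ u : ℝ, ‖F l u‖) ≤ ((l:ℝ)+1)^(-(1+2*ε)) * CB * Real.pi := h1
      _ = ((l:ℝ)+1)^(-(1+2*ε)) * (CB * Real.pi) := by ring
  have hIsum : Summable (fun l : ℕ => ∫ u : ℝ, ‖F l u‖) := by
    refine Summable.of_nonneg_of_le (fun l => MeasureTheory.integral_nonneg
      (fun u => norm_nonneg _)) hIle (hsumZ.mul_right (CB * Real.pi))
  have hswap : ∑' l : ℕ, (∫ u : ℝ, F l u) = ∫ u : ℝ, ∑' l : ℕ, F l u :=
    MeasureTheory.integral_tsum_of_summable_integral_norm hFint hIsum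
  -- pointwise tsum value
  have htsum : ∀ u : ℝ, ∑' l : ℕ, F l u
      = riemannZeta (1 - (((-2 * ε : ℝ) : ℂ) + u * Complex.I)) *
        ((H/D : ℝ) : ℂ) ^ (((-2 * ε : ℝ) : ℂ) + u * Complex.I) *
        G ((((-2 * ε : ℝ) : ℂ) + u * Complex.I) / (2 * Real.pi * Complex.I)) * Complex.I := by
    intro u
    have h1 : ∀ l : ℕ, F l u = (((l:ℝ)+1 : ℝ):ℂ) ^ ((((-2 * ε : ℝ) : ℂ) + u * Complex.I) - 1) *
        (((H/D : ℝ) : ℂ) ^ (((-2 * ε : ℝ) : ℂ) + u * Complex.I) *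
        (G ((((-2 * ε : ℝ) : ℂ) + u * Complex.I) / (2 * Real.pi * Complex.I)) * Complex.I)) := by
      intro l; rw [hFdef]; ring
    rw [tsum_congr h1, tsum_mul_right,
      zeta_sum_eq _ (by simp [Complex.add_re]; positivity)]
    ring
  -- term identity
  have hterm : ∀ l : ℕ, (H:ℂ)^2 * ((‖W (((l:ℝ)+1) * H / D)‖^2 : ℝ) : ℂ)
      = ((H:ℂ) * (D:ℂ) / (2 * Real.pi * Complex.I)) * ∫ u : ℝ, F l u := by
    intro l
    have hr : (0:ℝ) < ((l:ℝ)+1) * H / D := by positivity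
    have hMell := hMellin _ hr (-2*ε) (by linarith) (by linarith)
    rw [hMell]
    have hint : (∫ u : ℝ, ((((l:ℝ)+1) * H / D : ℝ):ℂ) ^ (((-2 * ε : ℝ) : ℂ) + u * Complex.I) *
          G ((((-2 * ε : ℝ) : ℂ) + u * Complex.I) / (2 * Real.pi * Complex.I)) * Complex.I)
        = (((l:ℝ)+1 : ℝ):ℂ) * ∫ u : ℝ, F l u := by
      rw [← MeasureTheory.integral_const_mul]
      congr 1; funext u
      have hsplit : ((((l:ℝ)+1) * H / D : ℝ):ℂ) ^ (((-2 * ε : ℝ) : ℂ) + u * Complex.I)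
          = (((l:ℝ)+1 : ℝ):ℂ) ^ (((-2 * ε : ℝ) : ℂ) + u * Complex.I) *
            ((H/D : ℝ):ℂ) ^ (((-2 * ε : ℝ) : ℂ) + u * Complex.I) := by
        rw [show ((l:ℝ)+1) * H / D = ((l:ℝ)+1) * (H/D) by ring, Complex.ofReal_mul]
        exact Complex.mul_cpow_ofReal_nonneg (a := ((l:ℝ)+1)) (b := H/D)
          (by positivity) (by positivity) _
      have hpow : (((l:ℝ)+1 : ℝ):ℂ) ^ (((-2 * ε : ℝ) : ℂ) + u * Complex.I)
          = (((l:ℝ)+1 : ℝ):ℂ) *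
            (((l:ℝ)+1 : ℝ):ℂ) ^ ((((-2 * ε : ℝ) : ℂ) + u * Complex.I) - 1) := by
        conv_lhs => rw [show (((-2 * ε : ℝ) : ℂ) + u * Complex.I)
          = 1 + ((((-2 * ε : ℝ) : ℂ) + u * Complex.I) - 1) by ring]
        rw [Complex.cpow_add _ _ (by exact_mod_cast (by positivity : ((l:ℝ)+1) ≠ 0)),
          Complex.cpow_one]
      rw [hFdef, hsplit, hpow]
      ring
    rw [hint]
    have ha : (((l:ℝ)+1 : ℝ):ℂ) ≠ 0 := by exact_mod_cast (by positivity : ((l:ℝ)+1) ≠ 0)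
    have hHc : (H:ℂ) ≠ 0 := by exact_mod_cast ne_of_gt hH0
    have hDc : (D:ℂ) ≠ 0 := by exact_mod_cast ne_of_gt hD0
    have hπI : (2 * (Real.pi:ℂ) * Complex.I) ≠ 0 := by
      simp [Complex.I_ne_zero, Complex.ofReal_ne_zero.mpr Real.pi_ne_zero]
    have hc : ((((l:ℝ)+1) * H / D : ℝ) : ℂ) = (((l:ℝ)+1:ℝ):ℂ) * (H:ℂ) / (D:ℂ) := by
      push_cast; ring
    rw [hc]
    exact alg_helper _ _ _ _ _ ha hπI hHc
  -- main equality
  have heq : (H : ℂ) ^ 2 * ∑' l : ℕ, ((‖W (((l : ℝ) + 1) * H / D)‖ ^ 2 : ℝ) : ℂ) =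
      ((H : ℂ) * (D : ℂ) / (2 * Real.pi * Complex.I)) *
        ∑' l : ℕ, ∫ u : ℝ, F l u := by
    rw [← tsum_mul_left, tsum_congr hterm, tsum_mul_left]
  constructor
  · rw [heq, hswap]
    congr 1
    exact MeasureTheory.integral_congr_ae (Filter.Eventually.of_forall htsum)
  -- the bound
  have hQ0 : (0:ℝ) ≤ H ^ 2 * ∑' l : ℕ, ‖W (((l : ℝ) + 1) * H / D)‖ ^ 2 := by
    have : (0:ℝ) ≤ ∑' l : ℕ, ‖W (((l : ℝ) + 1) * H / D)‖ ^ 2 := tsum_nonneg (fun l : ℕ => by positivity :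
      ∀ l : ℕ, (0:ℝ) ≤ ‖W (((l : ℝ) + 1) * H / D)‖ ^ 2)
    positivity
  have hcast : ((H ^ 2 * ∑' l : ℕ, ‖W (((l : ℝ) + 1) * H / D)‖ ^ 2 : ℝ) : ℂ)
      = (H : ℂ) ^ 2 * ∑' l : ℕ, ((‖W (((l : ℝ) + 1) * H / D)‖ ^ 2 : ℝ) : ℂ) := by
    push_cast [Complex.ofReal_tsum]
    ring
  have hnormInt : ‖∑' l : ℕ, ∫ u : ℝ, F l u‖ ≤ Z * (CB * Real.pi) := by
    have hs1 : Summable (fun l : ℕ => ‖∫ u : ℝ, F l u‖) := by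
      refine Summable.of_nonneg_of_le (fun l => norm_nonneg _)
        (fun l => (MeasureTheory.norm_integral_le_integral_norm _).trans (hIle l))
        (hsumZ.mul_right (CB * Real.pi))
    refine (norm_tsum_le_tsum_norm hs1).trans ?_
    have : ∀ l : ℕ, ‖∫ u : ℝ, F l u‖ ≤ ((l:ℝ)+1)^(-(1+2*ε)) * (CB * Real.pi) :=
      fun l => (MeasureTheory.norm_integral_le_integral_norm _).trans (hIle l)
    calc ∑' l : ℕ, ‖∫ u : ℝ, F l u‖
        ≤ ∑' l : ℕ, ((l:ℝ)+1)^(-(1+2*ε)) * (CB * Real.pi) :=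
          Summable.tsum_le_tsum this hs1 (hsumZ.mul_right _)
      _ = Z * (CB * Real.pi) := by rw [tsum_mul_right]
  have hnormC : ‖(H : ℂ) * (D : ℂ) / (2 * Real.pi * Complex.I)‖ = H * D / (2 * Real.pi) := by
    simp [norm_div, norm_mul, Complex.norm_real, abs_of_pos hH0, abs_of_pos hD0,
      abs_of_pos Real.pi_pos, Real.norm_eq_abs]
  have key : H ^ 2 * ∑' l : ℕ, ‖W (((l : ℝ) + 1) * H / D)‖ ^ 2
      ≤ (H * D / (2 * Real.pi)) * (Z * (CB * Real.pi)) := by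
    have h1 : H ^ 2 * ∑' l : ℕ, ‖W (((l : ℝ) + 1) * H / D)‖ ^ 2
        = ‖((H ^ 2 * ∑' l : ℕ, ‖W (((l : ℝ) + 1) * H / D)‖ ^ 2 : ℝ) : ℂ)‖ := by
      rw [Complex.norm_real, Real.norm_eq_abs, _root_.abs_of_nonneg hQ0]
    rw [h1, hcast, heq, norm_mul, hnormC]
    exact mul_le_mul_of_nonneg_left hnormInt (by positivity)
  refine key.trans ?_
  have hCBle : (H/D) ^ (-(2*ε)) ≤ D ^ (2*ε) := by
    have h1 : (H/D) ^ (-(2*ε)) = ((H/D)⁻¹) ^ (2*ε) := by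
      rw [Real.rpow_neg (by positivity), ← Real.inv_rpow (by positivity)]
    rw [h1, inv_div]
    refine Real.rpow_le_rpow (by positivity) ?_ (by positivity)
    calc D / H ≤ D / 1 := by gcongr
      _ = D := by ring
  have heq2 : (H * D / (2 * Real.pi)) * (Z * (CB * Real.pi))
      = (2*Real.pi^2*Z) * M * H * (H/D) ^ (-(2*ε)) * D := by
    rw [hCBdef]
    field_simp
    ring
  rw [heq2]
  calc (2*Real.pi^2*Z) * M * H * (H/D) ^ (-(2*ε)) * D
      ≤ (2*Real.pi^2*Z) * M * H * D ^ (2*ε) * D := by gcongr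
    _ ≤ (2*Real.pi^2*Z + 1) * M * H * D ^ (2*ε) * D := by
        have : (0:ℝ) ≤ M * H * D ^ (2*ε) * D := by positivity
        nlinarith
end

section
/- Let λ : ℕ → ℝ with |λ(d)| ≤ τ(d²) and let z ≥ 2, 0 < ε < 1/4. Then Σ_{d₁ ≤ z} Σ_{d₂ ≤ z} (|λ(d₁)|/d₁)(|λ(d₂)|/d₂)·gcd(d₁,d₂)^{1+2ε} ≪_ε z^{2ε}(log z)^{23}. -/
open Finset

lemma sum_le_sum_inj {α β : Type*} [DecidableEq β] {s : Finset α} {t : Finset β}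
    (i : α → β) (hi : ∀ a ∈ s, i a ∈ t)
    (hinj : ∀ a ∈ s, ∀ b ∈ s, i a = i b → a = b)
    {f : α → ℝ} {g : β → ℝ} (hg : ∀ b ∈ t, 0 ≤ g b)
    (hfg : ∀ a ∈ s, f a ≤ g (i a)) :
    ∑ a ∈ s, f a ≤ ∑ b ∈ t, g b := by
  calc ∑ a ∈ s, f a ≤ ∑ a ∈ s, g (i a) := Finset.sum_le_sum hfg
    _ = ∑ b ∈ s.image i, g b := (Finset.sum_image hinj).symm
    _ ≤ ∑ b ∈ t, g b := Finset.sum_le_sum_of_subset_of_nonneg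
        (Finset.image_subset_iff.mpr hi) (fun b hb _ => hg b hb)

lemma div_gcd_dvd_of_dvd_mul {d a b : ℕ} (ha : a ≠ 0) (hd : d ∣ a * b) :
    d / Nat.gcd d a ∣ b := by
  have hg : 0 < Nat.gcd d a := Nat.gcd_pos_of_pos_right _ (Nat.pos_of_ne_zero ha)
  have hco : Nat.Coprime (d / Nat.gcd d a) (a / Nat.gcd d a) :=
    Nat.coprime_div_gcd_div_gcd hg
  have h1 : d / Nat.gcd d a ∣ (a / Nat.gcd d a) * b := by
    have hgd : Nat.gcd d a ∣ d := Nat.gcd_dvd_left d a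
    have hga : Nat.gcd d a ∣ a := Nat.gcd_dvd_right d a
    have : Nat.gcd d a * (d / Nat.gcd d a) ∣ Nat.gcd d a * ((a / Nat.gcd d a) * b) := by
      rw [Nat.mul_div_cancel' hgd, ← mul_assoc, Nat.mul_div_cancel' hga]
      exact hd
    exact (mul_dvd_mul_iff_left hg.ne').mp this
  exact hco.dvd_of_dvd_mul_left h1

lemma tau_mul_le (a b : ℕ) (ha : a ≠ 0) (hb : b ≠ 0) :
    (a * b).divisors.card ≤ a.divisors.card * b.divisors.card := by
  rw [← Finset.card_product]
  apply Finset.card_le_card_of_injOn (fun d => (Nat.gcd d a, d / Nat.gcd d a))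
  · intro d hd
    rw [Finset.mem_coe, Nat.mem_divisors] at hd
    have hg : Nat.gcd d a ∣ a := Nat.gcd_dvd_right d a
    refine Finset.mem_product.mpr ⟨Nat.mem_divisors.mpr ⟨hg, ha⟩,
      Nat.mem_divisors.mpr ⟨div_gcd_dvd_of_dvd_mul ha hd.1, hb⟩⟩
  · intro d₁ h₁ d₂ h₂ h
    have e₁ : d₁ = Nat.gcd d₁ a * (d₁ / Nat.gcd d₁ a) :=
      (Nat.mul_div_cancel' (Nat.gcd_dvd_left d₁ a)).symm
    have e₂ : d₂ = Nat.gcd d₂ a * (d₂ / Nat.gcd d₂ a) :=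
      (Nat.mul_div_cancel' (Nat.gcd_dvd_left d₂ a)).symm
    rw [Prod.mk.injEq] at h
    calc d₁ = Nat.gcd d₁ a * (d₁ / Nat.gcd d₁ a) := e₁
      _ = Nat.gcd d₂ a * (d₂ / Nat.gcd d₂ a) := by rw [h.2, h.1]
      _ = d₂ := e₂.symm

def tR (n : ℕ) : ℝ := (n.divisors.card : ℝ)

lemma tR_eq (n : ℕ) : tR n = (n.divisors.card : ℝ) := rfl

attribute [irreducible] tR

lemma tR_nonneg (n : ℕ) : 0 ≤ tR n := by rw [tR_eq]; exact Nat.cast_nonneg _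

lemma tR_mul_le {a b : ℕ} (ha : a ≠ 0) (hb : b ≠ 0) : tR (a * b) ≤ tR a * tR b := by
  have := tau_mul_le a b ha hb
  unfold tR
  exact_mod_cast this

lemma card_antidiag (e : ℕ) : e.divisorsAntidiagonal.card = e.divisors.card := by
  rw [← Nat.map_div_right_divisors, Finset.card_map]

lemma tau_sq_le (n : ℕ) (hn : n ≠ 0) :
    (n ^ 2).divisors.card ≤ ∑ x ∈ n.divisors, (n / x).divisors.card := by
  rw [← Finset.card_sigma]
  apply Finset.card_le_card_of_injOn
    (fun d => ⟨d / Nat.gcd d n, n / Nat.gcd d n⟩)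
  · intro d hd
    have hdpos : 0 < d := Nat.pos_of_mem_divisors hd
    rw [Finset.mem_coe, Nat.mem_divisors] at hd
    have hd0 : d ≠ 0 := hdpos.ne'
    have hgpos : 0 < Nat.gcd d n := Nat.gcd_pos_of_pos_left _ hdpos
    set g := Nat.gcd d n with hgdef
    have hgd : g ∣ d := Nat.gcd_dvd_left d n
    have hgn : g ∣ n := Nat.gcd_dvd_right d n
    have hco : Nat.Coprime (d / g) (n / g) := Nat.coprime_div_gcd_div_gcd hgpos
    -- x := d / g divides g
    have hx1 : d / g ∣ (n / g) * n := by
      have h1 : g * (d / g) ∣ g * ((n / g) * n) := by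
        rw [Nat.mul_div_cancel' hgd, ← mul_assoc, Nat.mul_div_cancel' hgn]
        simpa [pow_two] using hd.1
      exact (mul_dvd_mul_iff_left hgpos.ne').mp h1
    have hxn : d / g ∣ n := hco.dvd_of_dvd_mul_left hx1
    have hxg : d / g ∣ g := by
      have h2 : d / g ∣ (n / g) * g := by
        rwa [Nat.div_mul_cancel hgn]
      exact hco.dvd_of_dvd_mul_left h2
    have hxdvd : d / g ∣ n := hxn
    refine Finset.mem_sigma.mpr ⟨Nat.mem_divisors.mpr ⟨hxdvd, hn⟩, ?_⟩
    refine Nat.mem_divisors.mpr ⟨?_, ?_⟩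
    · rw [Nat.dvd_div_iff_mul_dvd hxdvd]
      calc (d / g) * (n / g) ∣ g * (n / g) := mul_dvd_mul_right hxg _
        _ = n := Nat.mul_div_cancel' hgn
    · intro h0
      apply absurd (Nat.div_mul_cancel hxdvd)
      rw [h0, zero_mul]
      exact fun h => hn h.symm
  · intro d₁ h₁ d₂ h₂ h
    have key : ∀ d ∈ (n ^ 2).divisors, d = (n / (n / Nat.gcd d n)) * (d / Nat.gcd d n) := by
      intro d hd
      rw [Nat.div_div_self (Nat.gcd_dvd_right d n) hn, Nat.mul_div_cancel' (Nat.gcd_dvd_left d n)]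
    have hx : d₁ / Nat.gcd d₁ n = d₂ / Nat.gcd d₂ n :=
      congrArg (fun s : (_ : ℕ) × ℕ => s.fst) h
    have hy' : n / Nat.gcd d₁ n = n / Nat.gcd d₂ n :=
      congrArg (fun s : (_ : ℕ) × ℕ => s.snd) h
    calc d₁ = (n / (n / Nat.gcd d₁ n)) * (d₁ / Nat.gcd d₁ n) := key d₁ h₁
      _ = (n / (n / Nat.gcd d₂ n)) * (d₂ / Nat.gcd d₂ n) := by rw [hx, hy']
      _ = d₂ := (key d₂ h₂).symm

lemma Tstep (N k : ℕ) :
    ∑ e ∈ Icc 1 N, tR e ^ (k + 1) / e ≤ (∑ a ∈ Icc 1 N, tR a ^ k / a) ^ 2 := by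
  have h1 : ∀ e ∈ Icc 1 N, tR e ^ (k + 1) / e
      = ∑ p ∈ e.divisorsAntidiagonal, tR e ^ k / e := by
    intro e he
    rw [Finset.sum_const, card_antidiag, nsmul_eq_mul, ← tR_eq, pow_succ, mul_comm (tR e ^ k),
      mul_div_assoc]
  rw [Finset.sum_congr rfl h1,
    show (∑ e ∈ Icc 1 N, ∑ p ∈ e.divisorsAntidiagonal, tR e ^ k / (e:ℝ))
      = ∑ q ∈ (Icc 1 N).sigma (fun e => e.divisorsAntidiagonal), tR q.1 ^ k / q.1 from
      (Finset.sum_sigma (Icc 1 N) (fun e => e.divisorsAntidiagonal) (fun q => tR q.1 ^ k / (q.1:ℝ))).symm]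
  have key : ∑ q ∈ (Icc 1 N).sigma (fun e => e.divisorsAntidiagonal), tR q.1 ^ k / q.1
      ≤ ∑ p ∈ Icc 1 N ×ˢ Icc 1 N, (tR p.1 ^ k / p.1) * (tR p.2 ^ k / p.2) := by
    apply sum_le_sum_inj (fun q => q.2)
    · rintro ⟨e, p⟩ hq
      rw [Finset.mem_sigma] at hq
      obtain ⟨he, hp⟩ := hq
      rw [Nat.mem_divisorsAntidiagonal] at hp
      rw [Finset.mem_Icc] at he
      have h1 : p.1 ≠ 0 ∧ p.2 ≠ 0 := by
        constructor <;> rintro h <;> rw [h] at hp <;> simp at hp <;> omega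
      rw [Finset.mem_product, Finset.mem_Icc, Finset.mem_Icc]
      refine ⟨⟨Nat.one_le_iff_ne_zero.mpr h1.1, ?_⟩, ⟨Nat.one_le_iff_ne_zero.mpr h1.2, ?_⟩⟩
      · calc p.1 ≤ p.1 * p.2 := Nat.le_mul_of_pos_right _ (Nat.pos_of_ne_zero h1.2)
          _ = e := hp.1
          _ ≤ N := he.2
      · calc p.2 ≤ p.1 * p.2 := Nat.le_mul_of_pos_left _ (Nat.pos_of_ne_zero h1.1)
          _ = e := hp.1
          _ ≤ N := he.2
    · rintro ⟨e₁, p₁⟩ h₁ ⟨e₂, p₂⟩ h₂ h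
      dsimp only at h
      rw [Finset.mem_sigma] at h₁ h₂
      have he₁ := (Nat.mem_divisorsAntidiagonal.mp h₁.2).1
      have he₂ := (Nat.mem_divisorsAntidiagonal.mp h₂.2).1
      dsimp only at he₁ he₂
      have : e₁ = e₂ := by rw [← he₁, ← he₂, h]
      subst this
      simp [h]
    · intro p _
      have := tR_nonneg p.1
      have := tR_nonneg p.2
      positivity
    · rintro ⟨e, p⟩ hq
      rw [Finset.mem_sigma] at hq
      have hp := Nat.mem_divisorsAntidiagonal.mp hq.2
      dsimp only at hp ⊢
      have h1 : p.1 ≠ 0 ∧ p.2 ≠ 0 := by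
        constructor <;> rintro h <;> rw [h] at hp <;> simp at hp <;> omega
      have htau : tR e ≤ tR p.1 * tR p.2 := by
        rw [← hp.1]; exact tR_mul_le h1.1 h1.2
      have hcast : (e : ℝ) = (p.1 : ℝ) * (p.2 : ℝ) := by
        rw [← hp.1]; push_cast; ring
      calc tR e ^ k / (e : ℝ)
          ≤ (tR p.1 * tR p.2) ^ k / (e : ℝ) := by
            have hepos : (0:ℝ) < e := by
              have : e ≠ 0 := by rintro rfl; simp at hp
              positivity
            exact (div_le_div_iff_of_pos_right hepos).mpr (pow_le_pow_left₀ (tR_nonneg e) htau k)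
        _ = tR p.1 ^ k / p.1 * (tR p.2 ^ k / p.2) := by
            rw [hcast, mul_pow, div_mul_div_comm]
  calc ∑ q ∈ (Icc 1 N).sigma (fun e => e.divisorsAntidiagonal), tR q.1 ^ k / q.1
      ≤ ∑ p ∈ Icc 1 N ×ˢ Icc 1 N, (tR p.1 ^ k / p.1) * (tR p.2 ^ k / p.2) := key
    _ = (∑ a ∈ Icc 1 N, tR a ^ k / a) ^ 2 := by
        rw [Finset.sum_product]
        dsimp only
        rw [← Finset.sum_mul_sum (Icc 1 N) (Icc 1 N)
          (fun a => tR a ^ k / (a:ℝ)) (fun a => tR a ^ k / (a:ℝ)), sq]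

lemma A_le (N : ℕ) :
    ∑ m ∈ Icc 1 N, tR (m ^ 2) / m ≤ (∑ n ∈ Icc 1 N, 1 / (n : ℝ)) ^ 3 := by
  have H0 : (0:ℝ) ≤ ∑ n ∈ Icc 1 N, 1 / (n : ℝ) :=
    Finset.sum_nonneg fun n _ => by positivity
  have h1 : ∀ m ∈ Icc 1 N, tR (m ^ 2) / m ≤ ∑ x ∈ m.divisors, tR (m / x) / m := by
    intro m hm
    rw [Finset.mem_Icc] at hm
    have hm0 : m ≠ 0 := by omega
    have hmp : (0:ℝ) < m := by exact_mod_cast Nat.pos_of_ne_zero hm0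
    rw [← Finset.sum_div]
    have h := tau_sq_le m hm0
    have h' : ((m ^ 2).divisors.card : ℝ) ≤ ∑ x ∈ m.divisors, ((m / x).divisors.card : ℝ) := by
      exact_mod_cast h
    simp only [tR_eq]
    exact (div_le_div_iff_of_pos_right hmp).mpr h'
  calc ∑ m ∈ Icc 1 N, tR (m ^ 2) / m
      ≤ ∑ m ∈ Icc 1 N, ∑ x ∈ m.divisors, tR (m / x) / m := Finset.sum_le_sum h1
    _ = ∑ q ∈ (Icc 1 N).sigma (fun m => m.divisors), tR (q.1 / q.2) / q.1 :=
        (Finset.sum_sigma (Icc 1 N) (fun m => m.divisors)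
          (fun q => tR (q.1 / q.2) / (q.1 : ℝ))).symm
    _ ≤ ∑ p ∈ Icc 1 N ×ˢ Icc 1 N, (1 / (p.1 : ℝ)) * (tR p.2 / p.2) := by
        apply sum_le_sum_inj (fun q => (q.2, q.1 / q.2))
        · rintro ⟨m, x⟩ hq
          rw [Finset.mem_sigma] at hq
          obtain ⟨hm, hx⟩ := hq
          dsimp only at hm hx ⊢
          rw [Finset.mem_Icc] at hm
          have hx1 : 1 ≤ x := Nat.pos_of_mem_divisors hx
          have hxm : x ≤ m := Nat.divisor_le hx
          have hdvd : x ∣ m := Nat.dvd_of_mem_divisors hx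
          have hq1 : 1 ≤ m / x := by
            rw [Nat.le_div_iff_mul_le (by omega)]
            omega
          rw [Finset.mem_product, Finset.mem_Icc, Finset.mem_Icc]
          exact ⟨⟨hx1, le_trans hxm hm.2⟩, ⟨hq1, le_trans (Nat.div_le_self m x) hm.2⟩⟩
        · rintro ⟨m₁, x₁⟩ h₁ ⟨m₂, x₂⟩ h₂ h
          rw [Finset.mem_sigma] at h₁ h₂
          dsimp only at h
          rw [Prod.mk.injEq] at h
          have e₁ : m₁ = x₁ * (m₁ / x₁) :=
            (Nat.mul_div_cancel' (Nat.dvd_of_mem_divisors h₁.2)).symm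
          have e₂ : m₂ = x₂ * (m₂ / x₂) :=
            (Nat.mul_div_cancel' (Nat.dvd_of_mem_divisors h₂.2)).symm
          have hm : m₁ = m₂ := by
            calc m₁ = x₁ * (m₁ / x₁) := e₁
              _ = x₂ * (m₂ / x₂) := by rw [h.2, h.1]
              _ = m₂ := e₂.symm
          subst hm
          simp [h.1]
        · intro p _
          have := tR_nonneg p.2
          positivity
        · rintro ⟨m, x⟩ hq
          rw [Finset.mem_sigma] at hq
          obtain ⟨hm, hx⟩ := hq
          dsimp only at hm hx ⊢
          rw [Finset.mem_Icc] at hm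
          have hdvd : x ∣ m := Nat.dvd_of_mem_divisors hx
          have hx0 : x ≠ 0 := (Nat.pos_of_mem_divisors hx).ne'
          have hm0 : m ≠ 0 := by omega
          have hb0 : m / x ≠ 0 := by
            intro h0
            exact hm0 (by rw [← Nat.div_mul_cancel hdvd, h0, zero_mul])
          have hcast : (m : ℝ) = (x : ℝ) * ((m / x : ℕ) : ℝ) := by
            rw [← Nat.cast_mul, Nat.mul_div_cancel' hdvd]
          rw [hcast, div_mul_div_comm, one_mul]
    _ = (∑ n ∈ Icc 1 N, 1 / (n : ℝ)) * (∑ b ∈ Icc 1 N, tR b / b) := by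
        rw [Finset.sum_product]
        dsimp only
        rw [← Finset.sum_mul_sum (Icc 1 N) (Icc 1 N)
          (fun n => 1 / (n : ℝ)) (fun b => tR b / (b : ℝ))]
    _ ≤ (∑ n ∈ Icc 1 N, 1 / (n : ℝ)) * (∑ n ∈ Icc 1 N, 1 / (n : ℝ)) ^ 2 := by
        apply mul_le_mul_of_nonneg_left ?_ H0
        have h := Tstep N 0
        simp only [zero_add, pow_one, pow_zero] at h
        exact h
    _ = (∑ n ∈ Icc 1 N, 1 / (n : ℝ)) ^ 3 := by ring

lemma harmonic_le (N : ℕ) : ∑ n ∈ Icc 1 N, 1 / (n : ℝ) ≤ 1 + Real.log N := by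
  induction N with
  | zero => simp
  | succ M ih =>
    rcases Nat.eq_zero_or_pos M with rfl | hM
    · norm_num
    · rw [Finset.sum_Icc_succ_top (by omega : 1 ≤ M + 1)]
      have hM0 : (0:ℝ) < M := by exact_mod_cast hM
      have hM1 : (0:ℝ) < (M : ℝ) + 1 := by positivity
      have h := Real.log_le_sub_one_of_pos (show (0:ℝ) < (M:ℝ)/((M:ℝ)+1) by positivity)
      rw [Real.log_div hM0.ne' hM1.ne'] at h
      have heq : (M : ℝ) / ((M : ℝ) + 1) - 1 = -(1 / ((M : ℝ) + 1)) := by field_simp; ring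
      rw [heq] at h
      push_cast
      push_cast at ih
      linarith

set_option maxHeartbeats 1000000 in
/-- If `|λ(d)| ≤ τ(d²)` then
`∑_{d₁,d₂ ≤ z} (|λ(d₁)|/d₁)(|λ(d₂)|/d₂)·gcd(d₁,d₂)^{1+2ε} ≪_ε z^{2ε}(log z)^{23}`. -/
theorem gcd_weighted_double_sum_bound (ε : ℝ) (hε0 : 0 < ε) (hε1 : ε < 1/4) :
    ∃ C > 0, ∀ lam : ℕ → ℝ, (∀ d : ℕ, |lam d| ≤ (((d ^ 2).divisors.card : ℝ))) →
      ∀ z : ℝ, 2 ≤ z →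
        ∑ d₁ ∈ Finset.Icc 1 ⌊z⌋₊, ∑ d₂ ∈ Finset.Icc 1 ⌊z⌋₊,
            (|lam d₁| / d₁) * (|lam d₂| / d₂) *
              ((Nat.gcd d₁ d₂ : ℝ)) ^ ((1 : ℝ) + 2 * ε) ≤
          C * z ^ (2 * ε) * Real.log z ^ 23 := by
  refine ⟨2 * 3 ^ 22, by norm_num, ?_⟩
  intro lam hlam z hz
  set N := ⌊z⌋₊ with hNdef
  have hzpos : (0:ℝ) < z := by linarith
  have hNz : (N : ℝ) ≤ z := Nat.floor_le hzpos.le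
  have hN1 : 1 ≤ N := Nat.le_floor (by exact_mod_cast (by linarith : (1:ℝ) ≤ z))
  have hLpos : 0 < Real.log z := Real.log_pos (by linarith)
  have hL1 : 1 ≤ 2 * Real.log z := by
    have h2 : Real.log 2 ≤ Real.log z := Real.log_le_log (by norm_num) hz
    have := Real.log_two_gt_d9
    linarith
  set H := ∑ n ∈ Icc 1 N, 1 / (n : ℝ) with hHdef
  have H0 : 0 ≤ H := Finset.sum_nonneg fun n _ => by positivity
  have hH3 : H ≤ 3 * Real.log z := by
    have h1 : H ≤ 1 + Real.log N := harmonic_le N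
    have h2 : Real.log N ≤ Real.log z := by
      apply Real.log_le_log _ hNz
      exact_mod_cast hN1
    linarith
  set A := ∑ m ∈ Icc 1 N, tR (m ^ 2) / m with hAdef
  have HA0 : 0 ≤ A := Finset.sum_nonneg fun m _ => by
    have := tR_nonneg (m ^ 2); positivity
  -- step 1 : pointwise gcd bound
  have step1 : ∀ d₁ ∈ Icc 1 N, ∀ d₂ ∈ Icc 1 N,
      ((Nat.gcd d₁ d₂ : ℝ)) ^ ((1 : ℝ) + 2 * ε)
        ≤ ∑ e ∈ Icc 1 N, (if e ∣ d₁ then (1:ℝ) else 0) * (if e ∣ d₂ then (1:ℝ) else 0)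
            * (e : ℝ) ^ ((1 : ℝ) + 2 * ε) := by
    intro d₁ h₁ d₂ h₂
    rw [Finset.mem_Icc] at h₁ h₂
    have hmem : Nat.gcd d₁ d₂ ∈ Icc 1 N := Finset.mem_Icc.mpr
      ⟨Nat.gcd_pos_of_pos_left _ (by omega), le_trans (Nat.gcd_le_left _ (by omega)) h₁.2⟩
    have := Finset.single_le_sum (f := fun e => (if e ∣ d₁ then (1:ℝ) else 0)
        * (if e ∣ d₂ then (1:ℝ) else 0) * (e : ℝ) ^ ((1 : ℝ) + 2 * ε))
      (fun e _ => mul_nonneg (mul_nonneg (by split <;> norm_num) (by split <;> norm_num))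
        (Real.rpow_nonneg (Nat.cast_nonneg e) _)) hmem
    simpa [Nat.gcd_dvd_left, Nat.gcd_dvd_right] using this
  -- step 2 : rearrange double sum
  have step2 : ∑ d₁ ∈ Finset.Icc 1 N, ∑ d₂ ∈ Finset.Icc 1 N,
      (|lam d₁| / d₁) * (|lam d₂| / d₂) * ((Nat.gcd d₁ d₂ : ℝ)) ^ ((1 : ℝ) + 2 * ε)
      ≤ ∑ e ∈ Icc 1 N,
          (∑ d ∈ Icc 1 N, (if e ∣ d then |lam d| / (d:ℝ) else 0))
          * (∑ d ∈ Icc 1 N, (if e ∣ d then |lam d| / (d:ℝ) else 0))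
          * (e : ℝ) ^ ((1 : ℝ) + 2 * ε) := by
    calc ∑ d₁ ∈ Finset.Icc 1 N, ∑ d₂ ∈ Finset.Icc 1 N,
        (|lam d₁| / d₁) * (|lam d₂| / d₂) * ((Nat.gcd d₁ d₂ : ℝ)) ^ ((1 : ℝ) + 2 * ε)
        ≤ ∑ d₁ ∈ Finset.Icc 1 N, ∑ d₂ ∈ Finset.Icc 1 N,
          (|lam d₁| / d₁) * (|lam d₂| / d₂) *
            ∑ e ∈ Icc 1 N, (if e ∣ d₁ then (1:ℝ) else 0) * (if e ∣ d₂ then (1:ℝ) else 0)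
              * (e : ℝ) ^ ((1 : ℝ) + 2 * ε) := by
          apply Finset.sum_le_sum
          intro d₁ h₁
          apply Finset.sum_le_sum
          intro d₂ h₂
          exact mul_le_mul_of_nonneg_left (step1 d₁ h₁ d₂ h₂) (by positivity)
      _ = ∑ d₁ ∈ Finset.Icc 1 N, ∑ d₂ ∈ Finset.Icc 1 N, ∑ e ∈ Icc 1 N,
            (if e ∣ d₁ then |lam d₁| / (d₁:ℝ) else 0) * (if e ∣ d₂ then |lam d₂| / (d₂:ℝ) else 0)
              * (e : ℝ) ^ ((1 : ℝ) + 2 * ε) := by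
          apply Finset.sum_congr rfl; intro d₁ _
          apply Finset.sum_congr rfl; intro d₂ _
          rw [Finset.mul_sum]
          apply Finset.sum_congr rfl; intro e _
          split_ifs <;> ring
      _ = ∑ e ∈ Icc 1 N, ∑ d₁ ∈ Finset.Icc 1 N, ∑ d₂ ∈ Finset.Icc 1 N,
            (if e ∣ d₁ then |lam d₁| / (d₁:ℝ) else 0) * (if e ∣ d₂ then |lam d₂| / (d₂:ℝ) else 0)
              * (e : ℝ) ^ ((1 : ℝ) + 2 * ε) := by
          rw [Finset.sum_congr rfl (fun d₁ _ => Finset.sum_comm)]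
          exact Finset.sum_comm
      _ = ∑ e ∈ Icc 1 N,
          (∑ d ∈ Icc 1 N, (if e ∣ d then |lam d| / (d:ℝ) else 0))
          * (∑ d ∈ Icc 1 N, (if e ∣ d then |lam d| / (d:ℝ) else 0))
          * (e : ℝ) ^ ((1 : ℝ) + 2 * ε) := by
          apply Finset.sum_congr rfl; intro e _
          calc ∑ d₁ ∈ Finset.Icc 1 N, ∑ d₂ ∈ Finset.Icc 1 N,
              (if e ∣ d₁ then |lam d₁| / (d₁:ℝ) else 0) * (if e ∣ d₂ then |lam d₂| / (d₂:ℝ) else 0)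
                * (e : ℝ) ^ ((1 : ℝ) + 2 * ε)
              = ∑ d₁ ∈ Finset.Icc 1 N,
                (if e ∣ d₁ then |lam d₁| / (d₁:ℝ) else 0)
                * (∑ d₂ ∈ Finset.Icc 1 N, (if e ∣ d₂ then |lam d₂| / (d₂:ℝ) else 0))
                * (e : ℝ) ^ ((1 : ℝ) + 2 * ε) := by
                apply Finset.sum_congr rfl; intro d₁ _
                rw [← Finset.sum_mul, ← Finset.mul_sum]
            _ = _ := by rw [← Finset.sum_mul, ← Finset.sum_mul]
  -- step 3 : inner sum bound
  have step3 : ∀ e ∈ Icc 1 N,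
      (∑ d ∈ Icc 1 N, (if e ∣ d then |lam d| / (d:ℝ) else 0)) ≤ tR (e ^ 2) / (e : ℝ) * A := by
    intro e he
    rw [Finset.mem_Icc] at he
    have he0 : e ≠ 0 := by omega
    rw [← Finset.sum_filter, hAdef, Finset.mul_sum]
    apply sum_le_sum_inj (fun d => d / e)
    · intro d hd
      rw [Finset.mem_filter, Finset.mem_Icc] at hd
      rw [Finset.mem_Icc]
      constructor
      · rw [Nat.le_div_iff_mul_le (by omega)]
        have := Nat.le_of_dvd (by omega) hd.2
        omega
      · exact le_trans (Nat.div_le_self d e) hd.1.2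
    · intro d₁ h₁ d₂ h₂ h
      rw [Finset.mem_filter] at h₁ h₂
      calc d₁ = e * (d₁ / e) := (Nat.mul_div_cancel' h₁.2).symm
        _ = e * (d₂ / e) := by rw [h]
        _ = d₂ := Nat.mul_div_cancel' h₂.2
    · intro m _
      have h1 := tR_nonneg (e ^ 2)
      have h2 := tR_nonneg (m ^ 2)
      positivity
    · intro d hd
      rw [Finset.mem_filter, Finset.mem_Icc] at hd
      have hd0 : d ≠ 0 := by omega
      have hdvd : e ∣ d := hd.2
      have hdm : d = e * (d / e) := (Nat.mul_div_cancel' hdvd).symm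
      have hm0 : d / e ≠ 0 := by
        intro h0; rw [h0, mul_zero] at hdm; omega
      have hdpos : (0:ℝ) < d := by exact_mod_cast Nat.pos_of_ne_zero hd0
      have h1 : |lam d| / (d:ℝ) ≤ tR (d ^ 2) / d := by
        exact (div_le_div_iff_of_pos_right hdpos).mpr (by rw [tR_eq]; exact hlam d)
      apply h1.trans
      have hcast : (d : ℝ) = (e : ℝ) * ((d / e : ℕ) : ℝ) := by
        rw [← Nat.cast_mul, ← hdm]
      have hsq : d ^ 2 = e ^ 2 * (d / e) ^ 2 := by
        conv_lhs => rw [hdm]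
        ring
      have h2 : tR (d ^ 2) ≤ tR (e ^ 2) * tR ((d / e) ^ 2) := by
        rw [hsq]
        exact tR_mul_le (pow_ne_zero _ he0) (pow_ne_zero _ hm0)
      calc tR (d ^ 2) / (d : ℝ) ≤ (tR (e ^ 2) * tR ((d / e) ^ 2)) / (d : ℝ) :=
            (div_le_div_iff_of_pos_right hdpos).mpr h2
        _ = tR (e ^ 2) / (e:ℝ) * (tR ((d / e) ^ 2) / ((d / e : ℕ):ℝ)) := by
            rw [hcast, div_mul_div_comm]
  -- step 4 : per-e term bound
  have step4 : ∀ e ∈ Icc 1 N,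
      (∑ d ∈ Icc 1 N, (if e ∣ d then |lam d| / (d:ℝ) else 0))
        * (∑ d ∈ Icc 1 N, (if e ∣ d then |lam d| / (d:ℝ) else 0))
        * (e : ℝ) ^ ((1 : ℝ) + 2 * ε)
      ≤ A ^ 2 * (z ^ (2 * ε) * (tR e ^ 4 / e)) := by
    intro e he
    have heIcc := he
    rw [Finset.mem_Icc] at he
    have he0 : e ≠ 0 := by omega
    have hepos : (0:ℝ) < e := by exact_mod_cast Nat.pos_of_ne_zero he0
    have hQ0 : 0 ≤ ∑ d ∈ Icc 1 N, (if e ∣ d then |lam d| / (d:ℝ) else 0) :=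
      Finset.sum_nonneg fun d _ => by split <;> positivity
    have hR0 : 0 ≤ tR (e ^ 2) / (e : ℝ) * A := by
      have := tR_nonneg (e ^ 2); positivity
    have hQR := step3 e heIcc
    have hX0 : (0:ℝ) ≤ (e : ℝ) ^ ((1 : ℝ) + 2 * ε) := Real.rpow_nonneg (Nat.cast_nonneg e) _
    have hez : (e : ℝ) ≤ z := le_trans (by exact_mod_cast he.2) hNz
    have hX : (e : ℝ) ^ ((1 : ℝ) + 2 * ε) ≤ (e : ℝ) * z ^ (2 * ε) := by
      rw [Real.rpow_add hepos, Real.rpow_one]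
      exact mul_le_mul_of_nonneg_left
        (Real.rpow_le_rpow (Nat.cast_nonneg e) hez (by linarith)) (Nat.cast_nonneg e)
    have htau2 : tR (e ^ 2) ≤ tR e * tR e := by
      rw [pow_two]; exact tR_mul_le he0 he0
    have hte := tR_nonneg e
    have hte2 := tR_nonneg (e ^ 2)
    calc (∑ d ∈ Icc 1 N, (if e ∣ d then |lam d| / (d:ℝ) else 0))
        * (∑ d ∈ Icc 1 N, (if e ∣ d then |lam d| / (d:ℝ) else 0))
        * (e : ℝ) ^ ((1 : ℝ) + 2 * ε)
        ≤ (tR (e ^ 2) / (e : ℝ) * A) * (tR (e ^ 2) / (e : ℝ) * A)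
            * ((e : ℝ) * z ^ (2 * ε)) := by
          apply mul_le_mul (mul_le_mul hQR hQR hQ0 hR0) hX hX0
          exact mul_nonneg hR0 hR0
      _ = A ^ 2 * ((tR (e ^ 2) * tR (e ^ 2) / (e:ℝ)) * z ^ (2 * ε)) := by
          field_simp
      _ ≤ A ^ 2 * (z ^ (2 * ε) * (tR e ^ 4 / e)) := by
          apply mul_le_mul_of_nonneg_left ?_ (sq_nonneg A)
          rw [mul_comm ((tR (e ^ 2) * tR (e ^ 2) / (e:ℝ)))]
          apply mul_le_mul_of_nonneg_left ?_ (Real.rpow_nonneg hzpos.le _)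
          apply (div_le_div_iff_of_pos_right hepos).mpr
          calc tR (e ^ 2) * tR (e ^ 2) ≤ (tR e * tR e) * (tR e * tR e) :=
              mul_le_mul htau2 htau2 hte2 (mul_nonneg hte hte)
            _ = tR e ^ 4 := by ring
  -- step 5+6 : sum up and bound T₄
  have hT0 : ∀ k : ℕ, 0 ≤ ∑ e ∈ Icc 1 N, tR e ^ k / e :=
    fun k => Finset.sum_nonneg fun e _ => by have := tR_nonneg e; positivity
  have t4 : ∑ e ∈ Icc 1 N, tR e ^ 4 / e ≤ H ^ 16 := by
    have h4 := Tstep N 3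
    have h3 := Tstep N 2
    have h2 := Tstep N 1
    have h1 := Tstep N 0
    norm_num at h4 h3 h2 h1
    have hT1 : (0:ℝ) ≤ ∑ x ∈ Icc 1 N, tR x / x :=
      Finset.sum_nonneg fun e _ => by have := tR_nonneg e; positivity
    have h1' : ∑ x ∈ Icc 1 N, tR x / x ≤ H ^ 2 := by
      rw [hHdef]; simpa [one_div] using h1
    calc ∑ e ∈ Icc 1 N, tR e ^ 4 / e ≤ (∑ a ∈ Icc 1 N, tR a ^ 3 / a) ^ 2 := h4
      _ ≤ ((∑ a ∈ Icc 1 N, tR a ^ 2 / a) ^ 2) ^ 2 := pow_le_pow_left₀ (hT0 3) h3 2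
      _ ≤ (((∑ x ∈ Icc 1 N, tR x / x) ^ 2) ^ 2) ^ 2 :=
          pow_le_pow_left₀ (pow_nonneg (hT0 2) 2) (pow_le_pow_left₀ (hT0 2) h2 2) 2
      _ ≤ (((H ^ 2) ^ 2) ^ 2) ^ 2 :=
          pow_le_pow_left₀ (pow_nonneg (pow_nonneg hT1 2) 2)
            (pow_le_pow_left₀ (pow_nonneg hT1 2) (pow_le_pow_left₀ hT1 h1' 2) 2) 2
      _ = H ^ 16 := by ring
  have final : ∑ d₁ ∈ Finset.Icc 1 N, ∑ d₂ ∈ Finset.Icc 1 N,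
      (|lam d₁| / d₁) * (|lam d₂| / d₂) * ((Nat.gcd d₁ d₂ : ℝ)) ^ ((1 : ℝ) + 2 * ε)
      ≤ A ^ 2 * (z ^ (2 * ε) * ∑ e ∈ Icc 1 N, tR e ^ 4 / e) := by
    calc _ ≤ _ := step2
      _ ≤ ∑ e ∈ Icc 1 N, A ^ 2 * (z ^ (2 * ε) * (tR e ^ 4 / e)) := Finset.sum_le_sum step4
      _ = A ^ 2 * (z ^ (2 * ε) * ∑ e ∈ Icc 1 N, tR e ^ 4 / e) := by
          rw [← Finset.mul_sum, ← Finset.mul_sum]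
  have hzr0 : (0:ℝ) ≤ z ^ (2 * ε) := Real.rpow_nonneg hzpos.le _
  have hA3 : A ≤ H ^ 3 := A_le N
  calc ∑ d₁ ∈ Finset.Icc 1 N, ∑ d₂ ∈ Finset.Icc 1 N,
      (|lam d₁| / d₁) * (|lam d₂| / d₂) * ((Nat.gcd d₁ d₂ : ℝ)) ^ ((1 : ℝ) + 2 * ε)
      ≤ A ^ 2 * (z ^ (2 * ε) * ∑ e ∈ Icc 1 N, tR e ^ 4 / e) := final
    _ ≤ (H ^ 3) ^ 2 * (z ^ (2 * ε) * H ^ 16) := by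
        apply mul_le_mul (pow_le_pow_left₀ HA0 hA3 2)
          (mul_le_mul_of_nonneg_left t4 hzr0) (mul_nonneg hzr0 (hT0 4)) (by positivity)
    _ = z ^ (2 * ε) * H ^ 22 := by ring
    _ ≤ z ^ (2 * ε) * ((3 * Real.log z) ^ 22) := by
        apply mul_le_mul_of_nonneg_left (pow_le_pow_left₀ H0 hH3 22) hzr0
    _ ≤ 2 * 3 ^ 22 * z ^ (2 * ε) * Real.log z ^ 23 := by
        have hpow : Real.log z ^ 22 * 1 ≤ Real.log z ^ 22 * (2 * Real.log z) :=
          mul_le_mul_of_nonneg_left hL1 (pow_nonneg hLpos.le 22)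
        calc z ^ (2 * ε) * ((3 * Real.log z) ^ 22)
            = z ^ (2 * ε) * (3 ^ 22 * (Real.log z ^ 22 * 1)) := by ring
          _ ≤ z ^ (2 * ε) * (3 ^ 22 * (Real.log z ^ 22 * (2 * Real.log z))) := by
              apply mul_le_mul_of_nonneg_left ?_ hzr0
              apply mul_le_mul_of_nonneg_left hpow (by norm_num)
          _ = 2 * 3 ^ 22 * z ^ (2 * ε) * Real.log z ^ 23 := by ring
end
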